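/- If a finitely generated amenable group G satisfies the Haagerup-type condition for some length function ℓ, then its growth rate (minimal n with |B_p^{ℓ_S}| ≤ C p^n for a word-length ℓ_S of a finite generating set) is at most 3. Consequently no group containing ℤ⁴, or the discrete Heisenberg group (both of growth 4), admits any length function satisfying the Haagerup-type condition. -/

import Mathlib

open scoped Classical

/-- The `ℓ²`-norm of a finitely supported function. -/
noncomputable def fnorm2 {G : Type*} (f : MonoidAlgebra ℂ G) : ℝ :=
  Real.sqrt (∑ x ∈ f.coeff.support, ‖f.coeff x‖ ^ 2)

/-- `f` is supported on the sphere `E_k = {x : ℓ x = k}`. -/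
def SuppOnSphere {G : Type*} (ℓ : G → ℕ) (k : ℕ) (f : MonoidAlgebra ℂ G) : Prop :=
  ∀ x, f.coeff x ≠ 0 → ℓ x = k

/-- `P_m f`: the restriction (orthogonal projection in `ℓ²(G)`) of `f` to the
sphere `E_m = {x : ℓ x = m}`. -/
noncomputable def sphProj {G : Type*} (ℓ : G → ℕ) (m : ℕ) (f : MonoidAlgebra ℂ G) :
    MonoidAlgebra ℂ G :=
  MonoidAlgebra.ofCoeff (f.coeff.filter (fun x => ℓ x = m))

/-- `ℓ` is an integer-valued length function on the group `G`. -/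
def IsLengthFunction {G : Type*} [Group G] (ℓ : G → ℕ) : Prop :=
  ℓ 1 = 0 ∧ (∀ g : G, ℓ g⁻¹ = ℓ g) ∧ ∀ g h : G, ℓ (g * h) ≤ ℓ g + ℓ h

/-- The Haagerup-type condition for `(G, ℓ)` with constant `C`:
`‖P_m f P_n‖ ≤ C ‖f‖₂` for every `f` supported on the sphere `E_k`, expressed
concretely on `ℓ²(G)`: for every finitely supported `ξ` supported on `E_n`,
`‖P_m (f * ξ)‖₂ ≤ C ‖f‖₂ ‖ξ‖₂` (where `f * ξ` is the convolution). -/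
def GroupHaagerupCond {G : Type*} [Group G] (ℓ : G → ℕ) (C : ℝ) : Prop :=
  ∀ (k m n : ℕ) (f ξ : MonoidAlgebra ℂ G),
    SuppOnSphere ℓ k f → SuppOnSphere ℓ n ξ →
    fnorm2 (sphProj ℓ m (f * ξ)) ≤ C * fnorm2 f * fnorm2 ξ

/-- Amenability of a discrete group, in the Følner form. -/
def FolnerAmenable (G : Type*) [Group G] : Prop :=
  ∀ (S : Finset G) (ε : ℝ), 0 < ε → ∃ F : Finset G, F.Nonempty ∧
    ∀ s ∈ S, (((F.image (fun x => s * x)) \ F).card : ℝ) ≤ ε * F.card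

/-- The word-length function of a (symmetric) generating set `S`. -/
noncomputable def wordLength {G : Type*} [Group G] (S : Finset G) (g : G) : ℕ :=
  sInf {n : ℕ | ∃ l : List G, (∀ x ∈ l, x ∈ S) ∧ l.length = n ∧ l.prod = g}

/-- The balls of the length function `ℓ` grow at most polynomially of degree `d`. -/
def PolyGrowthBound {G : Type*} (ℓ : G → ℕ) (d : ℕ) : Prop :=
  ∃ c : ℝ, ∀ p : ℕ, 1 ≤ p →
    {x : G | ℓ x ≤ p}.Finite ∧ (Nat.card {x : G | ℓ x ≤ p} : ℝ) ≤ c * (p : ℝ) ^ d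

/-- The discrete Heisenberg group: `ℤ³` with
`(a,b,c)·(a',b',c') = (a+a', b+b', c+c'+a·b')`. -/
def Heisenberg : Type := ℤ × ℤ × ℤ

instance : One Heisenberg := ⟨((0 : ℤ), (0 : ℤ), (0 : ℤ))⟩

instance : Mul Heisenberg :=
  ⟨fun x y => (x.1 + y.1, x.2.1 + y.2.1, x.2.2 + y.2.2 + x.1 * y.2.1)⟩

instance : Inv Heisenberg := ⟨fun x => (-x.1, -x.2.1, -x.2.2 + x.1 * x.2.1)⟩

instance : Group Heisenberg where
  mul_assoc a b c := by
    refine Prod.ext ?_ (Prod.ext ?_ ?_)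
    · show a.1 + b.1 + c.1 = a.1 + (b.1 + c.1); ring
    · show a.2.1 + b.2.1 + c.2.1 = a.2.1 + (b.2.1 + c.2.1); ring
    · show a.2.2 + b.2.2 + a.1 * b.2.1 + c.2.2 + (a.1 + b.1) * c.2.1 =
        a.2.2 + (b.2.2 + c.2.2 + b.1 * c.2.1) + a.1 * (b.2.1 + c.2.1)
      ring
  one_mul a := by
    refine Prod.ext ?_ (Prod.ext ?_ ?_)
    · show 0 + a.1 = a.1; ring
    · show 0 + a.2.1 = a.2.1; ring
    · show 0 + a.2.2 + 0 * a.2.1 = a.2.2; ring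
  mul_one a := by
    refine Prod.ext ?_ (Prod.ext ?_ ?_)
    · show a.1 + 0 = a.1; ring
    · show a.2.1 + 0 = a.2.1; ring
    · show a.2.2 + 0 + a.1 * 0 = a.2.2; ring
  inv_mul_cancel a := by
    refine Prod.ext ?_ (Prod.ext ?_ ?_)
    · show -a.1 + a.1 = 0; ring
    · show -a.2.1 + a.2.1 = 0; ring
    · show -a.2.2 + a.1 * a.2.1 + a.2.2 + -a.1 * a.2.1 = 0; ring

/-!
For `f` supported in the `ℓ`-ball of radius `p`, the Haagerup-type condition gives
`‖f * ξ‖₂ ≤ C (2p + 1) √(p + 1) ‖f‖₂ ‖ξ‖₂`: split `f` and `ξ` along the spheres, and note that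
the product of functions on `E_k` and `E_n` only meets the `2k + 1` spheres `E_m` with
`|m - n| ≤ k`. For a finite set `A` in that ball and a Følner set `F` for `A`, the coefficients
of `1_A * 1_F` add up to `|A| |F|` on a support of size at most `2 |F|`, so Cauchy–Schwarz gives
`|A| ≤ 2 C² (2p + 1)² (p + 1)`. A word-length ball of radius `p` lies in the `ℓ`-ball of radius
`p · max_S ℓ`, hence has `O(p³)` elements.

Conversely, `ℤ⁴` and the Heisenberg group are amenable (boxes are Følner sets) and, for every
length function, contain `p⁴` elements of length `O(p)`; in the Heisenberg group this uses
`⁅x ^ q, y ^ p⁆ = z ^ (q p)`. Transported along an embedding, these contradict the cubic bound.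
-/

open scoped Pointwise commutatorElement

section L2

variable {G : Type*}

lemma fnorm2_nonneg (f : MonoidAlgebra ℂ G) : 0 ≤ fnorm2 f := Real.sqrt_nonneg _

lemma fnorm2_eq_of_support_subset {f : MonoidAlgebra ℂ G} {s : Finset G}
    (hs : f.coeff.support ⊆ s) : fnorm2 f = √(∑ x ∈ s, ‖f.coeff x‖ ^ 2) := by
  rw [fnorm2, Finset.sum_subset hs fun x _ hx => by simp [Finsupp.notMem_support_iff.mp hx]]

lemma fnorm2_sq_of_support_subset {f : MonoidAlgebra ℂ G} {s : Finset G}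
    (hs : f.coeff.support ⊆ s) : fnorm2 f ^ 2 = ∑ x ∈ s, ‖f.coeff x‖ ^ 2 := by
  rw [fnorm2_eq_of_support_subset hs, Real.sq_sqrt (by positivity)]

lemma fnorm2_eq_norm_toLp {f : MonoidAlgebra ℂ G} {s : Finset G} (hs : f.coeff.support ⊆ s) :
    fnorm2 f = ‖(WithLp.toLp 2 fun x : s => f.coeff x : EuclideanSpace ℂ s)‖ := by
  rw [EuclideanSpace.norm_eq, fnorm2_eq_of_support_subset hs,
    ← Finset.sum_coe_sort s fun x => ‖f.coeff x‖ ^ 2]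

lemma fnorm2_add_le (f g : MonoidAlgebra ℂ G) : fnorm2 (f + g) ≤ fnorm2 f + fnorm2 g := by
  set s := f.coeff.support ∪ g.coeff.support
  have hfg : (f + g).coeff.support ⊆ s := by
    rw [MonoidAlgebra.coeff_add]; exact Finsupp.support_add
  rw [fnorm2_eq_norm_toLp hfg, fnorm2_eq_norm_toLp (s := s) Finset.subset_union_left,
    fnorm2_eq_norm_toLp (s := s) Finset.subset_union_right]
  have hadd : (WithLp.toLp 2 fun x : s => (f + g).coeff x : EuclideanSpace ℂ s) =
      WithLp.toLp 2 (fun x : s => f.coeff x) + WithLp.toLp 2 fun x : s => g.coeff x := by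
    ext x; simp
  rw [hadd]
  exact norm_add_le _ _

lemma fnorm2_sum_le {ι : Type*} (t : Finset ι) (h : ι → MonoidAlgebra ℂ G) :
    fnorm2 (∑ i ∈ t, h i) ≤ ∑ i ∈ t, fnorm2 (h i) :=
  Finset.le_sum_of_subadditive fnorm2 (by simp [fnorm2]) fnorm2_add_le t h

lemma norm_sum_coeff_le {f : MonoidAlgebra ℂ G} {s : Finset G} (hs : f.coeff.support ⊆ s) :
    ‖∑ x ∈ s, f.coeff x‖ ^ 2 ≤ s.card * fnorm2 f ^ 2 := by
  rw [fnorm2_sq_of_support_subset hs]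
  refine (pow_le_pow_left₀ (norm_nonneg _) (norm_sum_le _ _) 2).trans ?_
  exact sq_sum_le_card_mul_sum_sq

end L2

section Spheres

variable {G : Type*}

lemma sphProj_coeff_apply (ℓ : G → ℕ) (m : ℕ) (f : MonoidAlgebra ℂ G) (x : G) :
    (sphProj ℓ m f).coeff x = if ℓ x = m then f.coeff x else 0 := by
  simp [sphProj, Finsupp.filter_apply]

lemma suppOnSphere_sphProj (ℓ : G → ℕ) (m : ℕ) (f : MonoidAlgebra ℂ G) :
    SuppOnSphere ℓ m (sphProj ℓ m f) := by
  intro x hx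
  by_contra h
  exact hx (by rw [sphProj_coeff_apply, if_neg h])

lemma sphProj_sum {ι : Type*} (ℓ : G → ℕ) (m : ℕ) (t : Finset ι) (h : ι → MonoidAlgebra ℂ G) :
    sphProj ℓ m (∑ i ∈ t, h i) = ∑ i ∈ t, sphProj ℓ m (h i) := by
  ext x
  simp only [MonoidAlgebra.coeff_sum, Finsupp.finsetSum_apply, sphProj_coeff_apply]
  split_ifs <;> simp

lemma sum_sphProj (ℓ : G → ℕ) (f : MonoidAlgebra ℂ G) {T : Finset ℕ}
    (hT : ∀ x ∈ f.coeff.support, ℓ x ∈ T) : ∑ m ∈ T, sphProj ℓ m f = f := by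
  ext x
  simp only [MonoidAlgebra.coeff_sum, Finsupp.finsetSum_apply, sphProj_coeff_apply,
    Finset.sum_ite_eq]
  by_cases hx : f.coeff x = 0
  · simp [hx]
  · rw [if_pos (hT x (Finsupp.mem_support_iff.mpr hx))]

lemma sum_fnorm2_sphProj_sq (ℓ : G → ℕ) (f : MonoidAlgebra ℂ G) {T : Finset ℕ}
    (hT : ∀ x ∈ f.coeff.support, ℓ x ∈ T) :
    ∑ m ∈ T, fnorm2 (sphProj ℓ m f) ^ 2 = fnorm2 f ^ 2 := by
  have hsphere : ∀ m, fnorm2 (sphProj ℓ m f) ^ 2 =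
      ∑ x ∈ f.coeff.support with ℓ x = m, ‖f.coeff x‖ ^ 2 := by
    intro m
    rw [fnorm2_sq_of_support_subset (f := sphProj ℓ m f) (Finsupp.support_filter _ _).le]
    refine Finset.sum_congr rfl fun x hx => ?_
    rw [sphProj_coeff_apply, if_pos (Finset.mem_filter.mp hx).2]
  simp only [hsphere]
  rw [fnorm2_sq_of_support_subset le_rfl]
  exact Finset.sum_fiberwise_of_maps_to hT _

lemma sphProj_mul_eq_zero [Group G] {ℓ : G → ℕ} (hl : IsLengthFunction ℓ) {k m n : ℕ}
    {u v : MonoidAlgebra ℂ G} (hu : SuppOnSphere ℓ k u) (hv : SuppOnSphere ℓ n v)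
    (hmn : ¬(m ≤ n + k ∧ n ≤ m + k)) : sphProj ℓ m (u * v) = 0 := by
  ext x
  rw [sphProj_coeff_apply]
  split_ifs with hm
  · by_contra hx
    obtain ⟨a, ha, b, hb, rfl⟩ := Finset.mem_mul.mp
      (MonoidAlgebra.support_coeff_mul_subset u v (Finsupp.mem_support_iff.mpr hx))
    have hka := hu a (Finsupp.mem_support_iff.mp ha)
    have hnb := hv b (Finsupp.mem_support_iff.mp hb)
    have hab := hl.2.2 a b
    have hb' := hl.2.2 a⁻¹ (a * b)
    rw [inv_mul_cancel_left, hl.2.1] at hb'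
    omega
  · rfl

end Spheres

section Haagerup

lemma card_filter_band_le (s : Finset ℕ) (k m : ℕ) :
    (s.filter fun n => m ≤ n + k ∧ n ≤ m + k).card ≤ 2 * k + 1 := by
  have hsub : (s.filter fun n => m ≤ n + k ∧ n ≤ m + k) ⊆ Finset.Icc (m - k) (m + k) := by
    intro n hn
    rw [Finset.mem_filter] at hn
    rw [Finset.mem_Icc]
    omega
  refine (Finset.card_le_card hsub).trans ?_
  rw [Nat.card_Icc]
  omega

lemma sum_sq_sum_band_le (M T : Finset ℕ) (k : ℕ) (a : ℕ → ℝ) :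
    ∑ m ∈ M, (∑ n ∈ T with m ≤ n + k ∧ n ≤ m + k, a n) ^ 2 ≤
      (2 * k + 1) ^ 2 * ∑ n ∈ T, a n ^ 2 := by
  have hband : ∀ (s : Finset ℕ) (m : ℕ),
      ((s.filter fun n => m ≤ n + k ∧ n ≤ m + k).card : ℝ) ≤ 2 * k + 1 := fun s m => by
    exact_mod_cast card_filter_band_le s k m
  calc ∑ m ∈ M, (∑ n ∈ T with m ≤ n + k ∧ n ≤ m + k, a n) ^ 2
      ≤ ∑ m ∈ M, (2 * k + 1) * ∑ n ∈ T with m ≤ n + k ∧ n ≤ m + k, a n ^ 2 := by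
        gcongr with m
        exact sq_sum_le_card_mul_sum_sq.trans
          (mul_le_mul_of_nonneg_right (hband T m) (Finset.sum_nonneg fun _ _ => sq_nonneg _))
    _ = (2 * k + 1) * ∑ n ∈ T, (M.filter fun m => m ≤ n + k ∧ n ≤ m + k).card * a n ^ 2 := by
        simp_rw [← Finset.mul_sum, Finset.sum_filter, Finset.card_filter, Nat.cast_sum,
          Finset.sum_mul]
        rw [Finset.sum_comm]
        congr 1
        refine Finset.sum_congr rfl fun n _ => Finset.sum_congr rfl fun m _ => ?_
        split_ifs <;> simp
    _ ≤ (2 * k + 1) * ∑ n ∈ T, (2 * k + 1) * a n ^ 2 := by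
        gcongr with n
        simpa only [and_comm] using hband M n
    _ = (2 * k + 1) ^ 2 * ∑ n ∈ T, a n ^ 2 := by
        rw [← Finset.mul_sum]; ring

variable {G : Type*} [Group G] {ℓ : G → ℕ} {C : ℝ}

lemma one_le_of_groupHaagerupCond (hl : IsLengthFunction ℓ) (hC : GroupHaagerupCond ℓ C) :
    1 ≤ C := by
  set δ : MonoidAlgebra ℂ G := MonoidAlgebra.single 1 1
  have hδ : SuppOnSphere ℓ 0 δ := by
    intro x hx
    rw [MonoidAlgebra.coeff_single, Finsupp.single_apply] at hx
    rw [← (by simpa using hx : 1 = x), hl.1]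
  have hproj : sphProj ℓ 0 δ = δ := by
    ext x
    rw [sphProj_coeff_apply]
    by_cases hx : 1 = x
    · rw [if_pos (by rw [← hx, hl.1])]
    · simp [δ, hx]
  have hnorm : fnorm2 δ = 1 := by
    rw [fnorm2_eq_of_support_subset (f := δ) (s := {1}) Finsupp.support_single_subset]
    simp [δ]
  have h := hC 0 0 0 δ δ hδ hδ
  rwa [MonoidAlgebra.single_mul_single, one_mul, mul_one, hproj, hnorm, mul_one, mul_one] at h

/-- Split `ξ` along the spheres: only the `2k + 1` spheres `E_n` with `|m - n| ≤ k` contribute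
to `P_m (f * ξ)`. -/
lemma fnorm2_mul_le_of_suppOnSphere (hl : IsLengthFunction ℓ) (hC : GroupHaagerupCond ℓ C)
    {k : ℕ} {f : MonoidAlgebra ℂ G} (hf : SuppOnSphere ℓ k f) (ξ : MonoidAlgebra ℂ G) :
    fnorm2 (f * ξ) ≤ C * (2 * k + 1) * fnorm2 f * fnorm2 ξ := by
  set T := ξ.coeff.support.image ℓ
  have hT : ∀ x ∈ ξ.coeff.support, ℓ x ∈ T := fun x hx => Finset.mem_image_of_mem ℓ hx
  have hdecomp : ∀ m, sphProj ℓ m (f * ξ) =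
      ∑ n ∈ T with m ≤ n + k ∧ n ≤ m + k, sphProj ℓ m (f * sphProj ℓ n ξ) := by
    intro m
    conv_lhs => rw [← sum_sphProj ℓ ξ hT, Finset.mul_sum, sphProj_sum]
    refine (Finset.sum_filter_of_ne fun n _ hne => ?_).symm
    by_contra h
    exact hne (sphProj_mul_eq_zero hl hf (suppOnSphere_sphProj ℓ n ξ) h)
  have hm : ∀ m, fnorm2 (sphProj ℓ m (f * ξ)) ≤
      ∑ n ∈ T with m ≤ n + k ∧ n ≤ m + k, C * fnorm2 f * fnorm2 (sphProj ℓ n ξ) := by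
    intro m
    rw [hdecomp]
    exact (fnorm2_sum_le _ _).trans
      (Finset.sum_le_sum fun n _ => hC k m n _ _ hf (suppOnSphere_sphProj ℓ n ξ))
  have hsq : fnorm2 (f * ξ) ^ 2 ≤ (C * (2 * k + 1) * fnorm2 f * fnorm2 ξ) ^ 2 :=
    calc fnorm2 (f * ξ) ^ 2
        = ∑ m ∈ (f * ξ).coeff.support.image ℓ, fnorm2 (sphProj ℓ m (f * ξ)) ^ 2 :=
          (sum_fnorm2_sphProj_sq ℓ _ fun x hx => Finset.mem_image_of_mem ℓ hx).symm
      _ ≤ ∑ m ∈ (f * ξ).coeff.support.image ℓ,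
            (∑ n ∈ T with m ≤ n + k ∧ n ≤ m + k, C * fnorm2 f * fnorm2 (sphProj ℓ n ξ)) ^ 2 :=
          Finset.sum_le_sum fun m _ => pow_le_pow_left₀ (fnorm2_nonneg _) (hm m) 2
      _ ≤ (2 * k + 1) ^ 2 * ∑ n ∈ T, (C * fnorm2 f * fnorm2 (sphProj ℓ n ξ)) ^ 2 :=
          sum_sq_sum_band_le _ _ _ _
      _ = (C * (2 * k + 1) * fnorm2 f * fnorm2 ξ) ^ 2 := by
          simp_rw [mul_pow _ (fnorm2 (sphProj ℓ _ ξ)), ← Finset.mul_sum,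
            sum_fnorm2_sphProj_sq ℓ ξ hT]
          ring
  have hC0 : 0 ≤ C := zero_le_one.trans (one_le_of_groupHaagerupCond hl hC)
  have := fnorm2_nonneg f
  have := fnorm2_nonneg ξ
  exact le_of_pow_le_pow_left₀ two_ne_zero (by positivity) hsq

lemma fnorm2_mul_sq_le_of_ball (hl : IsLengthFunction ℓ) (hC : GroupHaagerupCond ℓ C)
    {p : ℕ} {f : MonoidAlgebra ℂ G} (hf : ∀ x ∈ f.coeff.support, ℓ x ≤ p)
    (ξ : MonoidAlgebra ℂ G) :
    fnorm2 (f * ξ) ^ 2 ≤ C ^ 2 * (2 * p + 1) ^ 2 * (p + 1) * fnorm2 f ^ 2 * fnorm2 ξ ^ 2 := by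
  have hT : ∀ x ∈ f.coeff.support, ℓ x ∈ Finset.range (p + 1) :=
    fun x hx => Finset.mem_range.2 (Nat.lt_succ_of_le (hf x hx))
  have hC0 : 0 ≤ C := zero_le_one.trans (one_le_of_groupHaagerupCond hl hC)
  have hle : fnorm2 (f * ξ) ≤
      C * (2 * p + 1) * fnorm2 ξ * ∑ k ∈ Finset.range (p + 1), fnorm2 (sphProj ℓ k f) :=
    calc fnorm2 (f * ξ) = fnorm2 (∑ k ∈ Finset.range (p + 1), sphProj ℓ k f * ξ) := by
          rw [← Finset.sum_mul, sum_sphProj ℓ f hT]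
      _ ≤ ∑ k ∈ Finset.range (p + 1), fnorm2 (sphProj ℓ k f * ξ) := fnorm2_sum_le _ _
      _ ≤ ∑ k ∈ Finset.range (p + 1), C * (2 * p + 1) * fnorm2 ξ * fnorm2 (sphProj ℓ k f) := by
          refine Finset.sum_le_sum fun k hk => ?_
          have hkp : (k : ℝ) ≤ p := by exact_mod_cast Nat.lt_succ_iff.mp (Finset.mem_range.mp hk)
          have := fnorm2_nonneg (sphProj ℓ k f)
          have := fnorm2_nonneg ξ
          calc fnorm2 (sphProj ℓ k f * ξ)
              ≤ C * (2 * k + 1) * fnorm2 (sphProj ℓ k f) * fnorm2 ξ :=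
                fnorm2_mul_le_of_suppOnSphere hl hC (suppOnSphere_sphProj ℓ k f) ξ
            _ ≤ C * (2 * p + 1) * fnorm2 (sphProj ℓ k f) * fnorm2 ξ := by gcongr
            _ = _ := by ring
      _ = _ := (Finset.mul_sum _ _ _).symm
  have hcs : (∑ k ∈ Finset.range (p + 1), fnorm2 (sphProj ℓ k f)) ^ 2 ≤ (p + 1) * fnorm2 f ^ 2 := by
    have := sq_sum_le_card_mul_sum_sq (s := Finset.range (p + 1))
      (f := fun k => fnorm2 (sphProj ℓ k f))
    rwa [sum_fnorm2_sphProj_sq ℓ f hT, Finset.card_range, Nat.cast_succ] at this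
  calc fnorm2 (f * ξ) ^ 2
      ≤ (C * (2 * p + 1) * fnorm2 ξ) ^ 2 *
          (∑ k ∈ Finset.range (p + 1), fnorm2 (sphProj ℓ k f)) ^ 2 := by
        rw [← mul_pow]; exact pow_le_pow_left₀ (fnorm2_nonneg _) hle 2
    _ ≤ (C * (2 * p + 1) * fnorm2 ξ) ^ 2 * ((p + 1) * fnorm2 f ^ 2) := by gcongr
    _ = _ := by ring

end Haagerup

section Folner

variable {G : Type*} [Group G]

/-- The Følner condition of `FolnerAmenable`, for a single finite set. -/
def HasFolnerSets (A : Finset G) : Prop :=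
  ∀ ε : ℝ, 0 < ε → ∃ F : Finset G, F.Nonempty ∧
    ∀ a ∈ A, (((F.image fun x => a * x) \ F).card : ℝ) ≤ ε * F.card

lemma image_mul_left_eq_smul (a : G) (F : Finset G) : F.image (fun x => a * x) = a • F :=
  Finset.image_smul (a := a) (s := F)

lemma card_mul_smul_sdiff_le (g h : G) (F : Finset G) :
    ((g * h) • F \ F).card ≤ (g • F \ F).card + (h • F \ F).card := by
  calc ((g * h) • F \ F).card ≤ ((g * h) • F \ g • F ∪ g • F \ F).card :=
        Finset.card_le_card (sdiff_triangle _ _ _)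
    _ ≤ ((g * h) • F \ g • F).card + (g • F \ F).card := Finset.card_union_le _ _
    _ = (g • F \ F).card + (h • F \ F).card := by
        rw [mul_smul, ← Finset.smul_finset_sdiff, Finset.card_smul_finset, add_comm]

lemma card_inv_smul_sdiff (g : G) (F : Finset G) : (g⁻¹ • F \ F).card = (g • F \ F).card := by
  have h : g⁻¹ • F \ F = g⁻¹ • (F \ g • F) := by
    rw [Finset.smul_finset_sdiff, inv_smul_smul]
  rw [h, Finset.card_smul_finset, Finset.card_sdiff_comm (Finset.card_smul_finset g F).symm]

lemma card_smul_sdiff_le_of_subset {g : G} {E F : Finset G} (hEF : E ⊆ F) (hEg : E ⊆ g • F) :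
    (g • F \ F).card ≤ F.card - E.card := by
  calc (g • F \ F).card ≤ (g • F \ E).card := Finset.card_le_card (Finset.sdiff_subset_sdiff le_rfl hEF)
    _ = F.card - E.card := by rw [Finset.card_sdiff_of_subset hEg, Finset.card_smul_finset]

/-- `g ↦ |gF \ F|` is subadditive and invariant under inversion. -/
lemma exists_card_smul_sdiff_le_of_mem_closure (S : Finset G) {g : G}
    (hg : g ∈ Subgroup.closure (S : Set G)) :
    ∃ n : ℕ, ∀ F : Finset G, (g • F \ F).card ≤ n * ∑ s ∈ S, (s • F \ F).card := by
  induction hg using Subgroup.closure_induction with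
  | mem s hs =>
    exact ⟨1, fun F => by
      rw [one_mul]; exact Finset.single_le_sum (f := fun s => (s • F \ F).card) (by simp) hs⟩
  | one => exact ⟨0, fun F => by simp⟩
  | mul g h _ _ ihg ihh =>
    obtain ⟨m, hm⟩ := ihg
    obtain ⟨n, hn⟩ := ihh
    exact ⟨m + n, fun F => (card_mul_smul_sdiff_le g h F).trans
      (by rw [add_mul]; exact add_le_add (hm F) (hn F))⟩
  | inv g _ ihg =>
    obtain ⟨n, hn⟩ := ihg
    exact ⟨n, fun F => (card_inv_smul_sdiff g F).trans_le (hn F)⟩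

lemma HasFolnerSets.of_subset_closure {S A : Finset G} (hS : HasFolnerSets S)
    (hA : (A : Set G) ⊆ Subgroup.closure (S : Set G)) : HasFolnerSets A := by
  have hev : ∀ a ∈ A, ∀ᶠ n : ℕ in Filter.atTop,
      ∀ F : Finset G, (a • F \ F).card ≤ n * ∑ s ∈ S, (s • F \ F).card := by
    intro a ha
    obtain ⟨n, hn⟩ := exists_card_smul_sdiff_le_of_mem_closure S (hA ha)
    exact Filter.eventually_atTop.2 ⟨n, fun m hm F => (hn F).trans (Nat.mul_le_mul_right _ hm)⟩
  obtain ⟨n, hn⟩ := ((Filter.eventually_all_finset A).2 hev).exists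
  intro ε hε
  set δ := ε / (n * S.card + 1)
  obtain ⟨F, hF, hFS⟩ := hS δ (by positivity)
  refine ⟨F, hF, fun a ha => ?_⟩
  rw [image_mul_left_eq_smul]
  have hsum : (∑ s ∈ S, (s • F \ F).card : ℝ) ≤ S.card * (δ * F.card) := by
    have := Finset.sum_le_sum fun s hs => (image_mul_left_eq_smul s F ▸ hFS s hs)
    rwa [Finset.sum_const, nsmul_eq_mul] at this
  calc ((a • F \ F).card : ℝ) ≤ n * ∑ s ∈ S, ((s • F \ F).card : ℝ) := by exact_mod_cast hn a ha F
    _ ≤ n * (S.card * (δ * F.card)) := by gcongr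
    _ = (n * S.card) / (n * S.card + 1) * ε * F.card := by ring
    _ ≤ 1 * ε * F.card := by
        gcongr
        exact (div_le_one (by positivity)).2 (by linarith)
    _ = ε * F.card := by rw [one_mul]

/-- The last condition says `|F \ E| ≤ c |F| / N`; then `E ⊆ F ∩ sF` forces
`|sF \ F| ≤ c |F| / N`. -/
lemma HasFolnerSets.of_inner (S : Finset G) (c : ℕ)
    (h : ∀ N : ℕ, ∃ F E : Finset G, F.Nonempty ∧ E ⊆ F ∧ (∀ s ∈ S, ∀ g ∈ E, s⁻¹ * g ∈ F) ∧
      N * F.card ≤ c * F.card + N * E.card) : HasFolnerSets S := by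
  intro ε hε
  set N := ⌈c / ε⌉₊ + 1
  obtain ⟨F, E, hF, hEF, hES, hN⟩ := h N
  refine ⟨F, hF, fun s hs => ?_⟩
  rw [image_mul_left_eq_smul]
  have hES : ∀ s ∈ S, E ⊆ s • F := fun s hs g hg =>
    Finset.mem_smul_finset.2 ⟨s⁻¹ * g, hES s hs g hg, mul_inv_cancel_left s g⟩
  have hcard : N * (s • F \ F).card ≤ c * F.card := by
    have hEF' := Finset.card_le_card hEF
    calc N * (s • F \ F).card ≤ N * (F.card - E.card) :=
          Nat.mul_le_mul_left _ (card_smul_sdiff_le_of_subset hEF (hES s hs))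
      _ ≤ c * F.card := by rw [Nat.mul_sub]; omega
  have hNpos : (0 : ℝ) < N := by positivity
  have hcN : (c : ℝ) ≤ ε * N := by
    have := Nat.le_ceil ((c : ℝ) / ε)
    rw [div_le_iff₀ hε] at this
    have : ((⌈(c : ℝ) / ε⌉₊ : ℕ) : ℝ) ≤ N := by exact_mod_cast Nat.le_succ _
    nlinarith
  have hcard' : (N : ℝ) * (s • F \ F).card ≤ c * F.card := by exact_mod_cast hcard
  refine le_of_mul_le_mul_left ?_ hNpos
  nlinarith [(Nat.cast_nonneg F.card : (0 : ℝ) ≤ F.card)]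

lemma HasFolnerSets.image {H : Type*} [Group H] (φ : H →* G) (hφ : Function.Injective φ)
    {A : Finset H} (hA : HasFolnerSets A) : HasFolnerSets (A.image φ) := by
  intro ε hε
  obtain ⟨F, hF, hFA⟩ := hA ε hε
  refine ⟨F.image φ, hF.image φ, fun a ha => ?_⟩
  obtain ⟨b, hb, rfl⟩ := Finset.mem_image.mp ha
  have himage : (F.image φ).image (fun x => φ b * x) = (F.image fun x => b * x).image φ := by
    rw [Finset.image_image, Finset.image_image]
    exact Finset.image_congr fun x _ => (map_mul φ b x).symm
  rw [himage, ← Finset.image_sdiff _ _ hφ, Finset.card_image_of_injective _ hφ,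
    Finset.card_image_of_injective _ hφ]
  exact hFA b hb

lemma card_mul_le_add_sum_card_smul_sdiff (A F : Finset G) :
    (A * F).card ≤ F.card + ∑ a ∈ A, (a • F \ F).card := by
  have hsub : A * F ⊆ F ∪ A.biUnion fun a => a • F \ F := by
    intro y hy
    obtain ⟨a, ha, b, hb, rfl⟩ := Finset.mem_mul.mp hy
    by_cases hyF : a * b ∈ F
    · exact Finset.mem_union_left _ hyF
    · exact Finset.mem_union_right _ (Finset.mem_biUnion.mpr
        ⟨a, ha, Finset.mem_sdiff.mpr ⟨Finset.smul_mem_smul_finset hb, hyF⟩⟩)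
  exact (Finset.card_le_card hsub).trans
    ((Finset.card_union_le _ _).trans (Nat.add_le_add_left Finset.card_biUnion_le _))

end Folner

section Growth

variable {G : Type*}

noncomputable def setIndicator (s : Finset G) : MonoidAlgebra ℂ G :=
  ∑ a ∈ s, MonoidAlgebra.single a 1

lemma setIndicator_coeff (s : Finset G) (x : G) :
    (setIndicator s).coeff x = if x ∈ s then 1 else 0 := by
  simp [setIndicator, MonoidAlgebra.coeff_sum, Finsupp.finsetSum_apply, Finsupp.single_apply]

lemma support_setIndicator_subset (s : Finset G) : (setIndicator s).coeff.support ⊆ s := by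
  intro x hx
  by_contra h
  exact Finsupp.mem_support_iff.mp hx (by rw [setIndicator_coeff, if_neg h])

lemma fnorm2_setIndicator_sq (s : Finset G) : fnorm2 (setIndicator s) ^ 2 = s.card := by
  rw [fnorm2_sq_of_support_subset (support_setIndicator_subset s)]
  simp +contextual [setIndicator_coeff]

variable [Group G]

/-- The sum of the coefficients is multiplicative, so those of `1_A * 1_F` add up to `|A| |F|`;
then Cauchy–Schwarz on the support `A * F`. -/
lemma card_mul_card_sq_le (A F : Finset G) :
    ((A.card : ℝ) * F.card) ^ 2 ≤ (A * F).card * fnorm2 (setIndicator A * setIndicator F) ^ 2 := by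
  set ε := MonoidAlgebra.lift ℂ ℂ G 1
  have hε : ∀ {f : MonoidAlgebra ℂ G} {s : Finset G}, f.coeff.support ⊆ s →
      ε f = ∑ x ∈ s, f.coeff x := fun hs => by
    rw [MonoidAlgebra.lift_apply, Finsupp.sum_of_support_subset _ hs _ (by simp)]
    simp
  have hsupp : (setIndicator A * setIndicator F).coeff.support ⊆ A * F :=
    (MonoidAlgebra.support_coeff_mul_subset _ _).trans
      (Finset.mul_subset_mul (support_setIndicator_subset A) (support_setIndicator_subset F))
  have hcard : ∀ s : Finset G, ε (setIndicator s) = s.card := fun s => by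
    rw [hε (support_setIndicator_subset s)]
    simp +contextual [setIndicator_coeff]
  have h := norm_sum_coeff_le hsupp
  rwa [← hε hsupp, map_mul, hcard, hcard, ← Nat.cast_mul, Complex.norm_natCast, Nat.cast_mul] at h

variable {ℓ : G → ℕ} {C : ℝ}

theorem card_le_of_groupHaagerupCond (hl : IsLengthFunction ℓ) (hC : GroupHaagerupCond ℓ C)
    {A : Finset G} (hA : HasFolnerSets A) {p : ℕ} (hAp : ∀ a ∈ A, ℓ a ≤ p) :
    (A.card : ℝ) ≤ 2 * C ^ 2 * (2 * p + 1) ^ 2 * (p + 1) := by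
  rcases A.eq_empty_or_nonempty with rfl | hAne
  · simp only [Finset.card_empty, Nat.cast_zero]; positivity
  have hApos : (0 : ℝ) < A.card := by exact_mod_cast hAne.card_pos
  obtain ⟨F, hFne, hF⟩ := hA (1 / A.card) (by positivity)
  have hFpos : (0 : ℝ) < F.card := by exact_mod_cast hFne.card_pos
  have hAF : ((A * F).card : ℝ) ≤ 2 * F.card := by
    have hsum : ∑ a ∈ A, ((a • F \ F).card : ℝ) ≤ F.card :=
      calc ∑ a ∈ A, ((a • F \ F).card : ℝ) ≤ ∑ a ∈ A, 1 / (A.card : ℝ) * F.card :=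
            Finset.sum_le_sum fun a ha => image_mul_left_eq_smul a F ▸ hF a ha
        _ = F.card := by
            rw [Finset.sum_const, nsmul_eq_mul, ← mul_assoc, mul_one_div_cancel hApos.ne', one_mul]
    have : ((A * F).card : ℝ) ≤ F.card + ∑ a ∈ A, ((a • F \ F).card : ℝ) := by
      exact_mod_cast card_mul_le_add_sum_card_smul_sdiff A F
    linarith
  have hup := fnorm2_mul_sq_le_of_ball hl hC
    (fun x hx => hAp x (support_setIndicator_subset A hx)) (setIndicator F)
  rw [fnorm2_setIndicator_sq, fnorm2_setIndicator_sq] at hup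
  have key : (A.card * F.card : ℝ) * (A.card * F.card) ≤
      (A.card * F.card) * (2 * C ^ 2 * (2 * p + 1) ^ 2 * (p + 1) * F.card) :=
    calc (A.card * F.card : ℝ) * (A.card * F.card) = (A.card * F.card : ℝ) ^ 2 := by ring
      _ ≤ (A * F).card * fnorm2 (setIndicator A * setIndicator F) ^ 2 := card_mul_card_sq_le A F
      _ ≤ (2 * F.card) * (C ^ 2 * (2 * p + 1) ^ 2 * (p + 1) * A.card * F.card) :=
          mul_le_mul hAF hup (sq_nonneg _) (by positivity)
      _ = _ := by ring
  exact le_of_mul_le_mul_right (le_of_mul_le_mul_left key (by positivity)) hFpos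

end Growth

section LengthFunctions

variable {G : Type*} [Group G] {ℓ : G → ℕ}

lemma IsLengthFunction.comp {H : Type*} [Group H] (hl : IsLengthFunction ℓ) (φ : H →* G) :
    IsLengthFunction (fun h => ℓ (φ h)) :=
  ⟨by simp [hl.1], fun g => by simp [hl.2.1], fun g h => by simpa using hl.2.2 (φ g) (φ h)⟩

lemma IsLengthFunction.list_prod_le (hl : IsLengthFunction ℓ) {M : ℕ} :
    ∀ l : List G, (∀ x ∈ l, ℓ x ≤ M) → ℓ l.prod ≤ l.length * M
  | [], _ => by simp [hl.1]
  | a :: l, h => by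
    have ht := hl.list_prod_le l fun x hx => h x (List.mem_cons_of_mem a hx)
    have := hl.2.2 a l.prod
    have := h a List.mem_cons_self
    rw [List.prod_cons, List.length_cons, Nat.succ_mul]
    omega

lemma IsLengthFunction.pow_le (hl : IsLengthFunction ℓ) (g : G) (n : ℕ) : ℓ (g ^ n) ≤ n * ℓ g := by
  simpa using hl.list_prod_le (List.replicate n g) fun x hx => (List.eq_of_mem_replicate hx ▸ le_rfl)

lemma IsLengthFunction.le_mul_wordLength (hl : IsLengthFunction ℓ) {S : Finset G}
    (hgen : ∀ g : G, ∃ l : List G, (∀ x ∈ l, x ∈ S) ∧ l.prod = g) (g : G) :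
    ℓ g ≤ S.sup ℓ * wordLength S g := by
  obtain ⟨l, hlS, hlg⟩ := hgen g
  obtain ⟨l', hl'S, hl'len, rfl⟩ := Nat.sInf_mem (s := {n : ℕ | ∃ l : List G,
    (∀ x ∈ l, x ∈ S) ∧ l.length = n ∧ l.prod = g}) ⟨l.length, l, hlS, rfl, hlg⟩
  rw [wordLength, ← hl'len, mul_comm]
  exact hl.list_prod_le l' fun x hx => Finset.le_sup (hl'S x hx)

lemma IsLengthFunction.commutator_le (hl : IsLengthFunction ℓ) (g h : G) :
    ℓ ⁅g, h⁆ ≤ 2 * ℓ g + 2 * ℓ h := by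
  rw [commutatorElement_def]
  have := hl.2.2 (g * h * g⁻¹) h⁻¹
  have := hl.2.2 (g * h) g⁻¹
  have := hl.2.2 g h
  rw [hl.2.1] at *
  omega

variable {C : ℝ}

lemma card_le_of_groupHaagerupCond_of_le_mul (hl : IsLengthFunction ℓ)
    (hC : GroupHaagerupCond ℓ C) {A : Finset G} (hA : HasFolnerSets A) {K p : ℕ} (hp : 1 ≤ p)
    (hAK : ∀ a ∈ A, ℓ a ≤ K * p) :
    (A.card : ℝ) ≤ 2 * C ^ 2 * (2 * K + 1) ^ 2 * (K + 1) * p ^ 3 := by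
  have hp' : (1 : ℝ) ≤ p := by exact_mod_cast hp
  have hK : (0 : ℝ) ≤ K := Nat.cast_nonneg K
  refine (card_le_of_groupHaagerupCond hl hC hA hAK).trans ?_
  push_cast
  calc 2 * C ^ 2 * (2 * (K * p) + 1) ^ 2 * (K * p + 1)
      ≤ 2 * C ^ 2 * ((2 * K + 1) * p) ^ 2 * ((K + 1) * p) := by gcongr <;> nlinarith
    _ = 2 * C ^ 2 * (2 * K + 1) ^ 2 * (K + 1) * p ^ 3 := by ring

end LengthFunctions

lemma Set.finite_and_natCard_le_of_forall_finset {α : Type*} {s : Set α} {B : ℝ}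
    (h : ∀ t : Finset α, (t : Set α) ⊆ s → (t.card : ℝ) ≤ B) : s.Finite ∧ (Nat.card s : ℝ) ≤ B := by
  have hfin : s.Finite := by
    by_contra hinf
    obtain ⟨t, hts, htc⟩ := Set.Infinite.exists_subset_card_eq hinf (⌈B⌉₊ + 1)
    have := h t hts
    rw [htc, Nat.cast_add, Nat.cast_one] at this
    linarith [Nat.le_ceil B]
  exact ⟨hfin, by simpa [Nat.card_eq_card_finite_toFinset hfin] using h hfin.toFinset (by simp)⟩

theorem polyGrowthBound_wordLength_three {G : Type*} [Group G] (S : Finset G)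
    (hgen : ∀ g : G, ∃ l : List G, (∀ x ∈ l, x ∈ S) ∧ l.prod = g) (hG : FolnerAmenable G)
    {ℓ : G → ℕ} {C : ℝ} (hl : IsLengthFunction ℓ) (hC : GroupHaagerupCond ℓ C) :
    PolyGrowthBound (wordLength S) 3 := by
  refine ⟨2 * C ^ 2 * (2 * S.sup ℓ + 1) ^ 2 * (S.sup ℓ + 1), fun p hp =>
    Set.finite_and_natCard_le_of_forall_finset fun A hA => ?_⟩
  refine card_le_of_groupHaagerupCond_of_le_mul hl hC (fun ε hε => hG A ε hε) hp fun a ha => ?_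
  exact (hl.le_mul_wordLength hgen a).trans (Nat.mul_le_mul_left _ (hA ha))

theorem not_exists_groupHaagerupCond_of_quartic_family {H G : Type*} [Group H] [Group G]
    (φ : H →* G) (hφ : Function.Injective φ) (A : ℕ → Finset H) (hA : ∀ p, HasFolnerSets (A p))
    (hcard : ∀ p, p ^ 4 ≤ (A p).card)
    (hlen : ∀ ℓ : H → ℕ, IsLengthFunction ℓ → ∃ K : ℕ, ∀ p, ∀ a ∈ A p, ℓ a ≤ K * p) :
    ¬ ∃ (ℓ : G → ℕ) (C : ℝ), IsLengthFunction ℓ ∧ GroupHaagerupCond ℓ C := by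
  rintro ⟨ℓ, C, hl, hC⟩
  obtain ⟨K, hK⟩ := hlen _ (hl.comp φ)
  set D := 2 * C ^ 2 * (2 * K + 1) ^ 2 * (K + 1)
  set p := ⌈D⌉₊ + 1
  have hp : (0 : ℝ) < p := by positivity
  have hDp : D < p := (Nat.le_ceil D).trans_lt (by simp [p])
  have hbound : (p : ℝ) ^ 4 ≤ D * p ^ 3 := by
    calc (p : ℝ) ^ 4 ≤ ((A p).image φ).card := by
          rw [Finset.card_image_of_injective _ hφ]; exact_mod_cast hcard p
      _ ≤ D * p ^ 3 := card_le_of_groupHaagerupCond_of_le_mul hl hC ((hA p).image φ hφ)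
          (by omega) fun a ha => by
            obtain ⟨b, hb, rfl⟩ := Finset.mem_image.mp ha
            exact hK p b hb
  nlinarith [pow_pos hp 3]

section FreeAbelian

local notation "ℤ⁴" => Multiplicative (ℤ × ℤ × ℤ × ℤ)

namespace FreeAbelianRankFour

def e₁ : ℤ⁴ := Multiplicative.ofAdd (1, 0, 0, 0)
def e₂ : ℤ⁴ := Multiplicative.ofAdd (0, 1, 0, 0)
def e₃ : ℤ⁴ := Multiplicative.ofAdd (0, 0, 1, 0)
def e₄ : ℤ⁴ := Multiplicative.ofAdd (0, 0, 0, 1)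

def word (v : ℕ × ℕ × ℕ × ℕ) : ℤ⁴ := e₁ ^ v.1 * e₂ ^ v.2.1 * e₃ ^ v.2.2.1 * e₄ ^ v.2.2.2

lemma word_eq (v : ℕ × ℕ × ℕ × ℕ) :
    word v = Multiplicative.ofAdd ((v.1 : ℤ), (v.2.1 : ℤ), (v.2.2.1 : ℤ), (v.2.2.2 : ℤ)) := by
  simp only [word, e₁, e₂, e₃, e₄, ← ofAdd_nsmul, ← ofAdd_add]
  simp

def family (p : ℕ) : Finset ℤ⁴ :=
  (Finset.range p ×ˢ Finset.range p ×ˢ Finset.range p ×ˢ Finset.range p).image word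

lemma card_family (p : ℕ) : (family p).card = p ^ 4 := by
  rw [family, Finset.card_image_of_injective, Finset.card_product, Finset.card_product,
    Finset.card_product, Finset.card_range]
  · ring
  · intro v w h
    simp only [word_eq, EmbeddingLike.apply_eq_iff_eq, Prod.mk.injEq, Nat.cast_inj] at h
    exact Prod.ext h.1 (Prod.ext h.2.1 (Prod.ext h.2.2.1 h.2.2.2))

lemma length_le_of_mem_family {ℓ : ℤ⁴ → ℕ} (hl : IsLengthFunction ℓ) {p : ℕ} {g : ℤ⁴}
    (hg : g ∈ family p) : ℓ g ≤ (ℓ e₁ + ℓ e₂ + ℓ e₃ + ℓ e₄) * p := by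
  obtain ⟨⟨a, b, c, d⟩, hv, rfl⟩ := Finset.mem_image.mp hg
  simp only [Finset.mem_product, Finset.mem_range] at hv
  have h1 := hl.2.2 (e₁ ^ a * e₂ ^ b * e₃ ^ c) (e₄ ^ d)
  have h2 := hl.2.2 (e₁ ^ a * e₂ ^ b) (e₃ ^ c)
  have h3 := hl.2.2 (e₁ ^ a) (e₂ ^ b)
  have p1 := (hl.pow_le e₁ a).trans (Nat.mul_le_mul_right (ℓ e₁) (le_of_lt hv.1))
  have p2 := (hl.pow_le e₂ b).trans (Nat.mul_le_mul_right (ℓ e₂) (le_of_lt hv.2.1))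
  have p3 := (hl.pow_le e₃ c).trans (Nat.mul_le_mul_right (ℓ e₃) (le_of_lt hv.2.2.1))
  have p4 := (hl.pow_le e₄ d).trans (Nat.mul_le_mul_right (ℓ e₄) (le_of_lt hv.2.2.2))
  simp only [word]
  nlinarith

noncomputable def box (a b : ℤ) : Finset ℤ⁴ :=
  (Finset.Icc a b ×ˢ Finset.Icc a b ×ˢ Finset.Icc a b ×ˢ Finset.Icc a b).map
    Multiplicative.ofAdd.toEmbedding

lemma mem_box {a b : ℤ} {g : ℤ⁴} :
    g ∈ box a b ↔ (a ≤ g.toAdd.1 ∧ g.toAdd.1 ≤ b) ∧ (a ≤ g.toAdd.2.1 ∧ g.toAdd.2.1 ≤ b) ∧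
      (a ≤ g.toAdd.2.2.1 ∧ g.toAdd.2.2.1 ≤ b) ∧ (a ≤ g.toAdd.2.2.2 ∧ g.toAdd.2.2.2 ≤ b) := by
  simp [box, Finset.mem_map_equiv, Finset.mem_product]

lemma card_box (a b : ℤ) : (box a b).card = (b + 1 - a).toNat ^ 4 := by
  simp only [box, Finset.card_map, Finset.card_product, Int.card_Icc]
  ring

lemma hasFolnerSets_generators : HasFolnerSets {e₁, e₂, e₃, e₄} := by
  refine HasFolnerSets.of_inner _ 4 fun N => ⟨box 0 N, box 1 N, ⟨1, ?_⟩, ?_, ?_, ?_⟩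
  · rw [mem_box]; simp
  · intro g hg
    rw [mem_box] at hg ⊢
    omega
  · intro s hs g hg
    rw [mem_box] at hg ⊢
    simp only [Finset.mem_insert, Finset.mem_singleton] at hs
    rcases hs with rfl | rfl | rfl | rfl <;>
      simp only [e₁, e₂, e₃, e₄, toAdd_mul, toAdd_inv, toAdd_ofAdd, Prod.neg_mk, Prod.fst_add,
        Prod.snd_add] <;> omega
  · rw [card_box, card_box]
    simp only [sub_zero, add_sub_cancel_right, Int.toNat_natCast]
    rw [show ((N : ℤ) + 1).toNat = N + 1 by omega]
    ring_nf
    nlinarith [Nat.zero_le N, Nat.zero_le (N ^ 2), Nat.zero_le (N ^ 3)]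

lemma family_subset_closure (p : ℕ) :
    (family p : Set ℤ⁴) ⊆ Subgroup.closure (({e₁, e₂, e₃, e₄} : Finset ℤ⁴) : Set ℤ⁴) := by
  intro g hg
  obtain ⟨v, -, rfl⟩ := Finset.mem_image.mp hg
  have he : ∀ e ∈ ({e₁, e₂, e₃, e₄} : Finset ℤ⁴), e ∈ Subgroup.closure
      (({e₁, e₂, e₃, e₄} : Finset ℤ⁴) : Set ℤ⁴) := fun e he => Subgroup.subset_closure he
  exact mul_mem (mul_mem (mul_mem (pow_mem (he _ (by simp)) _) (pow_mem (he _ (by simp)) _))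
    (pow_mem (he _ (by simp)) _)) (pow_mem (he _ (by simp)) _)

end FreeAbelianRankFour

open FreeAbelianRankFour in
theorem not_exists_groupHaagerupCond_of_injective_freeAbelian {G : Type*} [Group G]
    (φ : ℤ⁴ →* G) (hφ : Function.Injective φ) :
    ¬ ∃ (ℓ : G → ℕ) (C : ℝ), IsLengthFunction ℓ ∧ GroupHaagerupCond ℓ C :=
  not_exists_groupHaagerupCond_of_quartic_family φ hφ family
    (fun p => hasFolnerSets_generators.of_subset_closure (family_subset_closure p))
    (fun p => (card_family p).ge)
    fun _ hl => ⟨_, fun _ _ hg => length_le_of_mem_family hl hg⟩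

end FreeAbelian


namespace Heisenberg

def mk (a b c : ℤ) : Heisenberg := (a, b, c)

lemma mk_mul_mk (a b c a' b' c' : ℤ) :
    mk a b c * mk a' b' c' = mk (a + a') (b + b') (c + c' + a * b') := rfl

lemma mk_inv (a b c : ℤ) : (mk a b c)⁻¹ = mk (-a) (-b) (-c + a * b) := rfl

lemma mk_inj {a b c a' b' c' : ℤ} : mk a b c = mk a' b' c' ↔ a = a' ∧ b = b' ∧ c = c' :=
  show ((a, b, c) : ℤ × ℤ × ℤ) = (a', b', c') ↔ _ by simp

lemma eta (g : Heisenberg) : g = mk g.1 g.2.1 g.2.2 := rfl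

def x : Heisenberg := mk 1 0 0
def y : Heisenberg := mk 0 1 0
def z : Heisenberg := mk 0 0 1

lemma x_pow (n : ℕ) : x ^ n = mk n 0 0 := by
  induction n with
  | zero => rfl
  | succ n ih => rw [pow_succ, ih, x, mk_mul_mk]; simp

lemma y_pow (n : ℕ) : y ^ n = mk 0 n 0 := by
  induction n with
  | zero => rfl
  | succ n ih => rw [pow_succ, ih, y, mk_mul_mk]; simp

lemma z_pow (n : ℕ) : z ^ n = mk 0 0 n := by
  induction n with
  | zero => rfl
  | succ n ih => rw [pow_succ, ih, z, mk_mul_mk]; simp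

lemma commutator_x_pow_y_pow (m n : ℕ) : ⁅x ^ m, y ^ n⁆ = mk 0 0 (m * n) := by
  rw [commutatorElement_def, x_pow, y_pow, mk_inv, mk_inv, mk_mul_mk, mk_mul_mk, mk_mul_mk]
  simp

/-- For `a, b, q, r < p` these are `p ^ 4` distinct elements of length `O(p)`. -/
def word (p : ℕ) (v : ℕ × ℕ × ℕ × ℕ) : Heisenberg :=
  x ^ v.1 * y ^ v.2.1 * z ^ v.2.2.2 * ⁅x ^ v.2.2.1, y ^ p⁆

lemma word_eq (p : ℕ) (v : ℕ × ℕ × ℕ × ℕ) :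
    word p v = mk v.1 v.2.1 (v.1 * v.2.1 + v.2.2.2 + v.2.2.1 * p) := by
  rw [word, commutator_x_pow_y_pow, x_pow, y_pow, z_pow, mk_mul_mk, mk_mul_mk, mk_mul_mk]
  simp

noncomputable def family (p : ℕ) : Finset Heisenberg :=
  (Finset.range p ×ˢ Finset.range p ×ˢ Finset.range p ×ˢ Finset.range p).image (word p)

lemma card_family (p : ℕ) : (family p).card = p ^ 4 := by
  rw [family, Finset.card_image_of_injOn, Finset.card_product, Finset.card_product,
    Finset.card_product, Finset.card_range]
  · ring
  rintro ⟨a, b, q, r⟩ hv ⟨a', b', q', r'⟩ hv' h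
  simp only [Finset.coe_product, Set.mem_prod, Finset.coe_range, Set.mem_Iio] at hv hv'
  simp only [word_eq, mk_inj, Nat.cast_inj] at h
  obtain ⟨rfl, rfl, h⟩ := h
  have h : r + q * p = r' + q' * p := by exact_mod_cast (by linarith : (r : ℤ) + q * p = r' + q' * p)
  have hr : r = r' := by
    have := congrArg (· % p) h
    simpa [Nat.add_mul_mod_self_right, Nat.mod_eq_of_lt hv.2.2.2, Nat.mod_eq_of_lt hv'.2.2.2]
      using this
  subst hr
  rw [Nat.eq_of_mul_eq_mul_right (by omega) (Nat.add_left_cancel h)]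

lemma length_le_of_mem_family {ℓ : Heisenberg → ℕ} (hl : IsLengthFunction ℓ) {p : ℕ}
    {g : Heisenberg} (hg : g ∈ family p) : ℓ g ≤ (3 * ℓ x + 3 * ℓ y + ℓ z) * p := by
  obtain ⟨⟨a, b, q, r⟩, hv, rfl⟩ := Finset.mem_image.mp hg
  simp only [Finset.mem_product, Finset.mem_range] at hv
  have h1 := hl.2.2 (x ^ a * y ^ b * z ^ r) ⁅x ^ q, y ^ p⁆
  have h2 := hl.2.2 (x ^ a * y ^ b) (z ^ r)
  have h3 := hl.2.2 (x ^ a) (y ^ b)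
  have hc := hl.commutator_le (x ^ q) (y ^ p)
  have pa := (hl.pow_le x a).trans (Nat.mul_le_mul_right (ℓ x) (le_of_lt hv.1))
  have pb := (hl.pow_le y b).trans (Nat.mul_le_mul_right (ℓ y) (le_of_lt hv.2.1))
  have pq := (hl.pow_le x q).trans (Nat.mul_le_mul_right (ℓ x) (le_of_lt hv.2.2.1))
  have pr := (hl.pow_le z r).trans (Nat.mul_le_mul_right (ℓ z) (le_of_lt hv.2.2.2))
  have pp := hl.pow_le y p
  simp only [word]
  nlinarith

lemma family_subset_closure (p : ℕ) :
    (family p : Set Heisenberg) ⊆ Subgroup.closure (({x, y, z} : Finset Heisenberg) : Set Heisenberg) := by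
  intro g hg
  obtain ⟨v, -, rfl⟩ := Finset.mem_image.mp hg
  have hx : x ∈ Subgroup.closure (({x, y, z} : Finset Heisenberg) : Set Heisenberg) :=
    Subgroup.subset_closure (by simp)
  have hy : y ∈ Subgroup.closure (({x, y, z} : Finset Heisenberg) : Set Heisenberg) :=
    Subgroup.subset_closure (by simp)
  have hz : z ∈ Subgroup.closure (({x, y, z} : Finset Heisenberg) : Set Heisenberg) :=
    Subgroup.subset_closure (by simp)
  rw [word, commutatorElement_def]
  exact mul_mem (mul_mem (mul_mem (pow_mem hx _) (pow_mem hy _)) (pow_mem hz _))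
    (mul_mem (mul_mem (mul_mem (pow_mem hx _) (pow_mem hy _)) (inv_mem (pow_mem hx _)))
      (inv_mem (pow_mem hy _)))

noncomputable def box (a₁ b₁ a₂ b₂ a₃ b₃ : ℤ) : Finset Heisenberg :=
  (Finset.Icc a₁ b₁ ×ˢ Finset.Icc a₂ b₂ ×ˢ Finset.Icc a₃ b₃ : Finset (ℤ × ℤ × ℤ))

lemma mk_mem_box {a₁ b₁ a₂ b₂ a₃ b₃ a b c : ℤ} :
    mk a b c ∈ box a₁ b₁ a₂ b₂ a₃ b₃ ↔
      (a₁ ≤ a ∧ a ≤ b₁) ∧ (a₂ ≤ b ∧ b ≤ b₂) ∧ (a₃ ≤ c ∧ c ≤ b₃) :=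
  show ((a, b, c) : ℤ × ℤ × ℤ) ∈ Finset.Icc a₁ b₁ ×ˢ Finset.Icc a₂ b₂ ×ˢ Finset.Icc a₃ b₃ ↔ _ by
    simp

lemma card_box (a₁ b₁ a₂ b₂ a₃ b₃ : ℤ) : (box a₁ b₁ a₂ b₂ a₃ b₃).card =
    (b₁ + 1 - a₁).toNat * ((b₂ + 1 - a₂).toNat * (b₃ + 1 - a₃).toNat) :=
  show (Finset.Icc a₁ b₁ ×ˢ Finset.Icc a₂ b₂ ×ˢ Finset.Icc a₃ b₃ : Finset (ℤ × ℤ × ℤ)).card = _ by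
    simp [Finset.card_product]

lemma hasFolnerSets_generators : HasFolnerSets {x, y, z} := by
  refine HasFolnerSets.of_inner _ 3 fun N =>
    ⟨box 0 N 0 N 0 (N ^ 2 + N), box 1 N 1 N N (N ^ 2 + N), ⟨mk 0 0 0, ?_⟩, ?_, ?_, ?_⟩
  all_goals have hN2 : (0 : ℤ) ≤ (N : ℤ) ^ 2 := by positivity
  · rw [mk_mem_box]; omega
  · intro g hg
    rw [eta g, mk_mem_box] at hg ⊢
    omega
  · intro s hs g hg
    rw [eta g, mk_mem_box] at hg
    simp only [Finset.mem_insert, Finset.mem_singleton] at hs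
    rcases hs with rfl | rfl | rfl <;> rw [eta g] <;>
      simp only [x, y, z, mk_inv, mk_mul_mk, mk_mem_box] <;> omega
  · rw [card_box, card_box]
    have hsq : ((N : ℤ) ^ 2) = ((N ^ 2 : ℕ) : ℤ) := by push_cast; ring
    have e₁ : ((N : ℤ) + 1 - 0).toNat = N + 1 := by omega
    have e₂ : ((N : ℤ) + 1 - 1).toNat = N := by omega
    have e₃ : ((N : ℤ) ^ 2 + N + 1 - 0).toNat = N ^ 2 + N + 1 := by omega
    have e₄ : ((N : ℤ) ^ 2 + N + 1 - N).toNat = N ^ 2 + 1 := by omega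
    rw [e₁, e₂, e₃, e₄]
    ring_nf
    nlinarith [Nat.zero_le N, Nat.zero_le (N ^ 2), Nat.zero_le (N ^ 3)]
end Heisenberg

theorem not_exists_groupHaagerupCond_of_injective_heisenberg {G : Type*} [Group G]
    (φ : Heisenberg →* G) (hφ : Function.Injective φ) :
    ¬ ∃ (ℓ : G → ℕ) (C : ℝ), IsLengthFunction ℓ ∧ GroupHaagerupCond ℓ C :=
  not_exists_groupHaagerupCond_of_quartic_family φ hφ Heisenberg.family
    (fun p => Heisenberg.hasFolnerSets_generators.of_subset_closure
      (Heisenberg.family_subset_closure p))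
    (fun p => (Heisenberg.card_family p).ge)
    fun _ hl => ⟨_, fun _ _ hg => Heisenberg.length_le_of_mem_family hl hg⟩

/-- If a finitely generated amenable group `G` satisfies the Haagerup-type condition for
some length function `ℓ`, then the growth rate of `G` (measured by any word-length `ℓ_S`
of a finite symmetric generating set `S`) is at most `3`.  Consequently no group
containing `ℤ⁴` or the discrete Heisenberg group (both of growth `4`, so without cubic
growth bound) admits a length function satisfying the Haagerup-type condition. -/
theorem stmt_13 :
    (∀ (G : Type) [Group G], ∀ (S : Finset G),
      (∀ s ∈ S, s⁻¹ ∈ S) →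
      (∀ g : G, ∃ l : List G, (∀ x ∈ l, x ∈ S) ∧ l.prod = g) →
      FolnerAmenable G →
      ∀ (ℓ : G → ℕ) (C : ℝ), IsLengthFunction ℓ → GroupHaagerupCond ℓ C →
        PolyGrowthBound (wordLength S) 3) ∧
    (∀ (G : Type) [Group G],
      ((∃ φ : Multiplicative (ℤ × ℤ × ℤ × ℤ) →* G, Function.Injective φ) ∨
        (∃ φ : Heisenberg →* G, Function.Injective φ)) →
      ¬ ∃ (ℓ : G → ℕ) (C : ℝ), IsLengthFunction ℓ ∧ GroupHaagerupCond ℓ C) := by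
  refine ⟨fun G _ S _ hgen hG ℓ C hl hC => polyGrowthBound_wordLength_three S hgen hG hl hC, ?_⟩
  rintro G _ (⟨φ, hφ⟩ | ⟨φ, hφ⟩)
  · exact not_exists_groupHaagerupCond_of_injective_freeAbelian φ hφ
  · exact not_exists_groupHaagerupCond_of_injective_heisenberg φ hφ
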